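/- Let M be a root-closed reduced cancellative monoid and A ⊆ M. Then x ∈ Ap(M,A) if and only if for each a ∈ A and positive integers m,n, the relation ma ≤_M nx implies m < n. -/
import Mathlib


/-- `x ≤_M y` : divisibility in the additive monoid `M`. -/
def MDvd {M : Type*} [AddCancelCommMonoid M] (x y : M) : Prop := ∃ z : M, y = x + z

/-- The Apéry set `Ap(M,A) = M \ (A + M)`. -/
def AperyM {M : Type*} [AddCancelCommMonoid M] (A : Set M) : Set M :=
  {x | ∀ a ∈ A, ¬ MDvd a x}

/-- `M` is root-closed: `n • a ≤_M n • b` for a positive `n` implies `a ≤_M b`. -/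
def RootClosedM (M : Type*) [AddCancelCommMonoid M] : Prop :=
  ∀ (n : ℕ) (a b : M), 0 < n → MDvd (n • a) (n • b) → MDvd a b

/-- in a root-closed monoid, `x ∈ Ap(M,A)` iff for each `a ∈ A` and
positive integers `m, n`, `m • a ≤_M n • x` implies `m < n`. -/
theorem mem_apery_iff_rootClosed {M : Type*} [AddCancelCommMonoid M]
    (hred : ∀ a b : M, a + b = 0 → a = 0)
    (hrc : RootClosedM M) (A : Set M) (x : M) :
    x ∈ AperyM A ↔
      ∀ a ∈ A, ∀ m n : ℕ, 0 < m → 0 < n → MDvd (m • a) (n • x) → m < n := by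
  constructor
  · intro hx a ha m n hm hn ⟨z, hz⟩
    by_contra hlt
    push_neg at hlt
    -- n ≤ m
    have hma : m • a = n • a + (m - n) • a := by
      rw [← add_smul]; congr 1; omega
    have : MDvd (n • a) (n • x) := ⟨(m - n) • a + z, by rw [hz, hma, add_assoc]⟩
    exact hx a ha (hrc n a x hn this)
  · intro h a ha hdvd
    have := h a ha 1 1 one_pos one_pos (by simpa using hdvd)
    omega
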